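/- The vector (ζ⁴,ζ³) belongs to Λ, and the maps r(z,w) = (ζz, ζ²w) and s(z,w) = (−conj(z), −conj(w)) of ℂ² to itself satisfy r(Λ) = Λ and s(Λ) = Λ. -/

import Mathlib

noncomputable section

/-- The primitive fifth root of unity `ζ = exp(2πi/5)`. -/
def ζ : ℂ := Complex.exp (2 * Real.pi * Complex.I / 5)

/-- The lattice `Λ ⊆ ℂ²` generated by `(1,1)`, `(ζ,ζ²)`, `(ζ²,ζ⁴)`, `(ζ³,ζ)`. -/
def Λ : AddSubgroup (ℂ × ℂ) :=
  AddSubgroup.closure {((1 : ℂ), (1 : ℂ)), (ζ, ζ ^ 2), (ζ ^ 2, ζ ^ 4), (ζ ^ 3, ζ)}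

/-- The map `r(z,w) = (ζz, ζ²w)`. -/
def r (p : ℂ × ℂ) : ℂ × ℂ := (ζ * p.1, ζ ^ 2 * p.2)

/-- The map `s(z,w) = (−conj z, −conj w)`. -/
def s (p : ℂ × ℂ) : ℂ × ℂ := (-(starRingEnd ℂ) p.1, -(starRingEnd ℂ) p.2)

/-!
The five points `(ζ^k, ζ^(2k))`, `k mod 5`, form the orbit of `(1,1)` under `r`; the first four are
the generators of `Λ` and the fifth, `(ζ⁴,ζ³)`, is minus their sum because `1 + ζ + ⋯ + ζ⁴ = 0`.
Since `r` moves the point of index `k` to that of index `k + 1`, and `conj ζ = ζ⁻¹ = ζ⁴` makes `s`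
send it to minus the point of index `4k`, both additive maps send generators into `Λ`. The
inclusions `r '' Λ ⊆ Λ`, `s '' Λ ⊆ Λ` are equalities because `r⁵ = id` and `s² = id`.
-/

theorem Set.MapsTo.image_eq_of_iterate_eq_id {α : Type*} {f : α → α} {S : Set α}
    (h : Set.MapsTo f S S) {n : ℕ} (hf : f^[n + 1] = id) : f '' S = S :=
  h.image_subset.antisymm fun x hx =>
    ⟨f^[n] x, h.iterate n hx, by rw [← Function.iterate_succ_apply' f n x, hf, id]⟩

theorem AddSubgroup.mapsTo_closure {G : Type*} [AddGroup G] (f : G →+ G) {S : Set G}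
    (h : Set.MapsTo f S (AddSubgroup.closure S)) :
    Set.MapsTo f (AddSubgroup.closure S) (AddSubgroup.closure S) :=
  fun _ hx => (AddSubgroup.closure_le (.comap f (.closure S))).2 h hx

theorem isPrimitiveRoot_ζ : IsPrimitiveRoot ζ 5 := by
  convert Complex.isPrimitiveRoot_exp 5 (by norm_num) using 2
  simp [ζ]

theorem ζ_pow_five : ζ ^ 5 = 1 := isPrimitiveRoot_ζ.pow_eq_one

theorem ζ_pow_mod (n : ℕ) : ζ ^ n = ζ ^ (n % 5) := pow_eq_pow_mod n ζ_pow_five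

theorem conj_ζ : starRingEnd ℂ ζ = ζ ^ 4 := by
  have h : starRingEnd ℂ ζ * ζ = ζ ^ 4 * ζ := by
    rw [Complex.conj_mul', Complex.norm_eq_one_of_pow_eq_one ζ_pow_five (by norm_num),
      ← pow_succ, ζ_pow_five, Complex.ofReal_one, one_pow]
  exact mul_right_cancel₀ (isPrimitiveRoot_ζ.ne_zero (by norm_num)) h

/-- `orbitVec k = r^k (1,1)`; the generators of `Λ` are `orbitVec 0, …, orbitVec 3`. -/
def orbitVec (k : ℕ) : ℂ × ℂ := (ζ ^ k, ζ ^ (2 * k))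

theorem orbitVec_mod (k : ℕ) : orbitVec k = orbitVec (k % 5) := by
  simp only [orbitVec, Prod.mk.injEq]
  rw [ζ_pow_mod k, ζ_pow_mod (2 * k), ζ_pow_mod (2 * (k % 5))]
  exact ⟨rfl, by congr 1; omega⟩

theorem orbitVec_three : orbitVec 3 = (ζ ^ 3, ζ) := by
  simp [orbitVec, ζ_pow_mod 6]

theorem orbitVec_four : orbitVec 4 = (ζ ^ 4, ζ ^ 3) := by
  simp [orbitVec, ζ_pow_mod 8]

theorem orbitVec_four_eq_neg_sum :
    orbitVec 4 = -(orbitVec 0 + orbitVec 1 + orbitVec 2 + orbitVec 3) := by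
  have hsum : 1 + ζ + ζ ^ 2 + ζ ^ 3 + ζ ^ 4 = 0 := by
    simpa [Finset.sum_range_succ] using isPrimitiveRoot_ζ.geom_sum_eq_zero (by norm_num)
  simp only [orbitVec, Prod.mk_add_mk, Prod.neg_mk, Prod.mk.injEq]
  constructor
  · linear_combination hsum
  · linear_combination hsum + (ζ ^ 3 + ζ) * ζ_pow_five

theorem generators_subset_range_orbitVec :
    {((1 : ℂ), (1 : ℂ)), (ζ, ζ ^ 2), (ζ ^ 2, ζ ^ 4), (ζ ^ 3, ζ)} ⊆ Set.range orbitVec := by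
  rintro _ (rfl | rfl | rfl | rfl)
  exacts [⟨0, by simp [orbitVec]⟩, ⟨1, by simp [orbitVec]⟩, ⟨2, by simp [orbitVec]⟩,
    ⟨3, orbitVec_three⟩]

theorem orbitVec_mem_of_lt_four {k : ℕ} (hk : k < 4) : orbitVec k ∈ Λ := by
  refine AddSubgroup.subset_closure ?_
  interval_cases k <;> simp [orbitVec, ζ_pow_mod 6]

theorem orbitVec_mem (k : ℕ) : orbitVec k ∈ Λ := by
  rw [orbitVec_mod]
  rcases (by omega : k % 5 < 4 ∨ k % 5 = 4) with hk | hk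
  · exact orbitVec_mem_of_lt_four hk
  · rw [hk, orbitVec_four_eq_neg_sum]
    have h (j : Fin 4) : orbitVec j ∈ Λ := orbitVec_mem_of_lt_four j.isLt
    exact neg_mem (add_mem (add_mem (add_mem (h 0) (h 1)) (h 2)) (h 3))

theorem mapsTo_Λ (f : ℂ × ℂ →+ ℂ × ℂ) (hf : ∀ k, f (orbitVec k) ∈ Λ) :
    Set.MapsTo f (Λ : Set (ℂ × ℂ)) Λ :=
  AddSubgroup.mapsTo_closure f fun _ hx => by
    obtain ⟨k, rfl⟩ := generators_subset_range_orbitVec hx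
    exact hf k

theorem r_orbitVec (k : ℕ) : r (orbitVec k) = orbitVec (k + 1) := by
  simp only [r, orbitVec, Prod.mk.injEq]
  constructor <;> ring

theorem s_orbitVec (k : ℕ) : s (orbitVec k) = -orbitVec (4 * k) := by
  simp only [s, orbitVec, map_pow, conj_ζ, Prod.neg_mk, Prod.mk.injEq]
  constructor <;> ring

theorem iterate_r (n : ℕ) (p : ℂ × ℂ) : r^[n] p = (ζ ^ n * p.1, ζ ^ (2 * n) * p.2) := by
  induction n with
  | zero => simp
  | succ n ih =>
    rw [Function.iterate_succ_apply', ih]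
    simp only [r, Prod.mk.injEq]
    constructor <;> ring

theorem iterate_r_five : r^[5] = id := by
  funext p
  rw [iterate_r, pow_mul', ζ_pow_five]
  simp

theorem s_s (p : ℂ × ℂ) : s (s p) = p := by
  simp [s]

def rHom : ℂ × ℂ →+ ℂ × ℂ :=
  AddMonoidHom.mk' r fun a b => by
    simp only [r, Prod.fst_add, Prod.snd_add, Prod.mk_add_mk, mul_add]

def sHom : ℂ × ℂ →+ ℂ × ℂ :=
  AddMonoidHom.mk' s fun a b => by
    simp only [s, Prod.fst_add, Prod.snd_add, Prod.mk_add_mk, map_add, neg_add]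

theorem mapsTo_r : Set.MapsTo r Λ Λ :=
  mapsTo_Λ rHom fun k => show r _ ∈ Λ from r_orbitVec k ▸ orbitVec_mem (k + 1)

theorem mapsTo_s : Set.MapsTo s Λ Λ :=
  mapsTo_Λ sHom fun k => show s _ ∈ Λ from s_orbitVec k ▸ neg_mem (orbitVec_mem (4 * k))

/-- `(ζ⁴,ζ³) ∈ Λ`, and `r(Λ) = Λ`, `s(Λ) = Λ`. -/
theorem lattice_invariance :
    (ζ ^ 4, ζ ^ 3) ∈ Λ ∧ r '' (Λ : Set (ℂ × ℂ)) = (Λ : Set (ℂ × ℂ)) ∧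
      s '' (Λ : Set (ℂ × ℂ)) = (Λ : Set (ℂ × ℂ)) := by
  refine ⟨orbitVec_four ▸ orbitVec_mem 4, ?_, ?_⟩
  · exact mapsTo_r.image_eq_of_iterate_eq_id iterate_r_five
  · exact mapsTo_s.image_eq_of_iterate_eq_id (n := 1) (funext s_s)

end
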